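/- For every k ≥ 2 and every n ≥ 2, if σ_1, σ_2, τ_1, τ_2 are nonempty subsets of S_k with |σ_1| = |σ_2| and |τ_1| = |τ_2|, then |ν_n(σ_1,τ_1) − ν_n(σ_2,τ_2)| ≤ 2|σ_1||τ_1|(2 + 3/(2k)); in particular the difference is at most D_k = 8k²(2 + 3/(2k)) = 16k² + 12k. -/

import Mathlib

/-!
Common setup: `Fk k` is the free group `F_k` on `k` generators; letters of the
alphabet `S_k = {g_1,…,g_k,g_1⁻¹,…,g_k⁻¹}` are encoded as pairs in `Fin k × Bool`
(`(i, true)` is `g_{i+1}`, `(i, false)` is `g_{i+1}⁻¹`); `wlen u` is the length of the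
unique reduced word representing `u`; `words k n` is the (finite) set of elements of
length `n`; `w k n` is `w_n`, the sum of all reduced words of length `n` in the group
algebra `ℂ[F_k] = MonoidAlgebra ℂ (Fk k)`.
-/

open scoped BigOperators

noncomputable section

abbrev Fk (k : ℕ) := FreeGroup (Fin k)

/-- The length `|u|` of the unique reduced word representing `u`. -/
def wlen {k : ℕ} (u : Fk k) : ℕ := (FreeGroup.toWord u).length

/-- The `Finset` of all elements of `F_k` whose reduced word has length `n`,
realized as the images of the reduced lists of letters of length `n`. -/
def words (k n : ℕ) : Finset (Fk k) :=
  (Finset.univ.filter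
      (fun v : List.Vector (Fin k × Bool) n => FreeGroup.reduce v.toList = v.toList)).image
    (fun v => FreeGroup.mk v.toList)

/-- `w_n`: the sum of all reduced words of length `n` in the group algebra `ℂ[F_k]`. -/
def w (k n : ℕ) : MonoidAlgebra ℂ (Fk k) :=
  ∑ u ∈ words k n, MonoidAlgebra.of ℂ (Fk k) u

/-- The first letter of the reduced word representing `u` (if any). -/
def firstLetter {k : ℕ} (u : Fk k) : Option (Fin k × Bool) := (FreeGroup.toWord u).head?

/-- The last letter of the reduced word representing `u` (if any). -/
def lastLetter {k : ℕ} (u : Fk k) : Option (Fin k × Bool) := (FreeGroup.toWord u).getLast?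

/-- The inverse of a letter. -/
def linv {k : ℕ} (a : Fin k × Bool) : Fin k × Bool := (a.1, !a.2)

/-- The set of reduced words of length `n` beginning with the letter `x` and ending with
the letter `y`. -/
def wordsXY (k n : ℕ) (x y : Fin k × Bool) : Finset (Fk k) :=
  (words k n).filter (fun u => firstLetter u = some x ∧ lastLetter u = some y)

/-- `ν_n(x,y)`: the number of reduced words of length `n` beginning with `x`, ending with `y`. -/
def nu (k n : ℕ) (x y : Fin k × Bool) : ℕ := (wordsXY k n x y).card

/-- `w_n(x,y)`: the sum of all reduced words of length `n` beginning with `x` and ending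
with `y`, in `ℂ[F_k]`. -/
def wXY (k n : ℕ) (x y : Fin k × Bool) : MonoidAlgebra ℂ (Fk k) :=
  ∑ u ∈ wordsXY k n x y, MonoidAlgebra.of ℂ (Fk k) u

/-- `ν_n(σ,τ)`: the number of reduced words of length `n` whose first letter lies in `σ`
and whose last letter lies in `τ`. -/
def nuS (k n : ℕ) (σ τ : Finset (Fin k × Bool)) : ℕ :=
  ((words k n).filter
    (fun u => (∃ a ∈ σ, firstLetter u = some a) ∧ (∃ b ∈ τ, lastLetter u = some b))).card

/-- The inner product `⟨a,b⟩ = Σ_g a_g conj(b_g)` on a group algebra. -/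
def inn {Γ : Type*} [Group Γ] (a b : MonoidAlgebra ℂ Γ) : ℂ :=
  ∑ g ∈ a.coeff.support, a.coeff g * (starRingEnd ℂ) (b.coeff g)

/-- `‖a‖₂² = ⟨a,a⟩ = Σ_g |a_g|²`. -/
def n2sq {Γ : Type*} [Group Γ] (a : MonoidAlgebra ℂ Γ) : ℝ :=
  ∑ g ∈ a.coeff.support, Complex.normSq (a.coeff g)

/-- `‖a‖₂ = ⟨a,a⟩^{1/2}`. -/
def n2 {Γ : Type*} [Group Γ] (a : MonoidAlgebra ℂ Γ) : ℝ := Real.sqrt (n2sq a)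

/-- The conditional expectation onto the Laplacian masa, restricted to `ℂ[F_k]`:
`E(a) = Σ_{n ≥ 0} (⟨a,w_n⟩ / ‖w_n‖₂²) w_n` (a finite sum for each `a`). -/
def Ee {k : ℕ} (a : MonoidAlgebra ℂ (Fk k)) : MonoidAlgebra ℂ (Fk k) :=
  ∑ᶠ n : ℕ, (inn a (w k n) / (n2sq (w k n) : ℂ)) • w k n

/-!
Removing the last letter of a reduced word gives
`ν_{n+1}(x, y) + ν_n(x, y⁻¹) = Σ_z ν_n(x, z)` for `n ≥ 1`. Starting from `ν_1(x, y) = [y = x]`,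
induction shows that `ν_n(x, y) = m_n + (-1)^(n+1) [y = ι^(n+1) x]` with `ι` the inversion of
letters. This is the identity `Aⁿ⁻¹ = c J + (-P)ⁿ⁻¹` for the non-backtracking matrix `A = J - P`,
with `J` the all-ones matrix and `P` the permutation matrix of `ι`. So all `ν_n(x, y)` lie in
some `[m, m + 1]`, `ν_n(σ, τ)` lies in `[|σ||τ| m, |σ||τ| (m + 1)]`, and the two counts differ
by at most `|σ₁||τ₁| ≤ 4k²`.
-/

theorem FreeGroup.toWord_mul_mk_singleton {α : Type*} [DecidableEq α] {v : FreeGroup α}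
    {y : α × Bool} (h : ∀ z ∈ v.toWord.getLast?, z.1 = y.1 → z.2 = y.2) :
    (v * FreeGroup.mk [y]).toWord = v.toWord ++ [y] := by
  rw [FreeGroup.toWord_mul, FreeGroup.toWord_mk, FreeGroup.reduce_singleton]
  refine FreeGroup.IsReduced.reduce_eq
    (List.isChain_append.mpr ⟨FreeGroup.isReduced_toWord, FreeGroup.IsReduced.singleton, ?_⟩)
  simpa using h

section Letters

variable {k : ℕ}

theorem linv_involutive : Function.Involutive (linv (k := k)) := fun a => by simp [linv]

theorem imp_iff_ne_linv {z y : Fin k × Bool} : (z.1 = y.1 → z.2 = y.2) ↔ z ≠ linv y := by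
  obtain ⟨i, b⟩ := z
  obtain ⟨j, c⟩ := y
  cases b <;> cases c <;> simp [linv]

theorem card_le_two_mul (s : Finset (Fin k × Bool)) : s.card ≤ 2 * k :=
  (Finset.card_le_univ s).trans_eq (by simp [mul_comm])

end Letters

section Counting

variable {k n : ℕ}

theorem mem_words {u : Fk k} : u ∈ words k n ↔ u.toWord.length = n := by
  simp only [words, Finset.mem_image, Finset.mem_filter, Finset.mem_univ, true_and]
  constructor
  · rintro ⟨v, hv, rfl⟩
    rw [FreeGroup.toWord_mk, hv, v.toList_length]
  · intro h
    exact ⟨⟨u.toWord, h⟩, FreeGroup.reduce_toWord u, FreeGroup.mk_toWord⟩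

theorem mem_wordsXY {x y : Fin k × Bool} {u : Fk k} :
    u ∈ wordsXY k n x y ↔
      u.toWord.length = n ∧ u.toWord.head? = some x ∧ u.toWord.getLast? = some y := by
  rw [wordsXY, Finset.mem_filter, mem_words, firstLetter, lastLetter]

theorem disjoint_wordsXY {x y x' y' : Fin k × Bool} (h : (x, y) ≠ (x', y')) :
    Disjoint (wordsXY k n x y) (wordsXY k n x' y') := by
  refine Finset.disjoint_left.mpr fun u hu hu' => h ?_
  rw [mem_wordsXY] at hu hu'
  rw [hu.2.1, hu.2.2, Option.some_inj, Option.some_inj] at hu'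
  rw [hu'.2.1, hu'.2.2]

theorem nu_zero (x y : Fin k × Bool) : nu k 0 x y = 0 := by
  refine Finset.card_eq_zero.mpr (Finset.eq_empty_of_forall_notMem fun u hu => ?_)
  obtain ⟨hlen, hhead, -⟩ := mem_wordsXY.mp hu
  simp [List.length_eq_zero_iff.mp hlen] at hhead

theorem nu_one (x y : Fin k × Bool) : nu k 1 x y = if y = x then 1 else 0 := by
  have hXY : wordsXY k 1 x y = ({FreeGroup.mk [x]} : Finset (Fk k)).filter (fun _ => y = x) := by
    ext u
    rw [mem_wordsXY, List.length_eq_one_iff, Finset.mem_filter, Finset.mem_singleton,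
      ← FreeGroup.toWord_inj, FreeGroup.toWord_mk, FreeGroup.reduce_singleton]
    constructor
    · rintro ⟨⟨a, ha⟩, hx, hy⟩
      simp only [ha, List.head?_cons, List.getLast?_singleton, Option.some_inj] at hx hy
      exact ⟨by rw [ha, hx], hy.symm.trans hx⟩
    · rintro ⟨hu, rfl⟩
      simp [hu]
  rw [nu, hXY, Finset.card_filter, Finset.sum_singleton]

theorem wordsXY_succ (hn : 1 ≤ n) (x y : Fin k × Bool) :
    wordsXY k (n + 1) x y = ((Finset.univ.erase (linv y)).biUnion (wordsXY k n x)).image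
      (· * FreeGroup.mk [y]) := by
  ext u
  simp only [Finset.mem_image, Finset.mem_biUnion, Finset.mem_erase, Finset.mem_univ, and_true]
  constructor
  · intro hu
    obtain ⟨hlen, hhead, hlast⟩ := mem_wordsXY.mp hu
    obtain ⟨L, hL⟩ := List.getLast?_eq_some_iff.mp hlast
    have hred : FreeGroup.IsReduced (L ++ [y]) := hL ▸ FreeGroup.isReduced_toWord
    obtain ⟨hLred, -, hjoin⟩ : FreeGroup.IsReduced L ∧ _ ∧ _ := List.isChain_append.mp hred
    have hLlen : L.length = n := by simpa [hL] using hlen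
    have hLne : L ≠ [] := List.ne_nil_of_length_pos (by omega)
    have hvL : (FreeGroup.mk L).toWord = L := by rw [FreeGroup.toWord_mk, hLred.reduce_eq]
    refine ⟨FreeGroup.mk L, ⟨L.getLast hLne, ?_, ?_⟩, ?_⟩
    · exact imp_iff_ne_linv.mp (hjoin _ (List.getLast_mem_getLast? hLne) y rfl)
    · rw [mem_wordsXY, hvL, ← List.head?_append_of_ne_nil L hLne, ← hL]
      exact ⟨hLlen, hhead, List.getLast?_eq_some_getLast hLne⟩
    · rw [FreeGroup.mul_mk, ← hL, FreeGroup.mk_toWord]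
  · rintro ⟨v, ⟨z, hz, hv⟩, rfl⟩
    obtain ⟨hlen, hhead, hlast⟩ := mem_wordsXY.mp hv
    have hvne : v.toWord ≠ [] := List.ne_nil_of_length_pos (by omega)
    rw [mem_wordsXY, FreeGroup.toWord_mul_mk_singleton, List.head?_append_of_ne_nil _ hvne]
    · exact ⟨by simp [hlen], hhead, List.getLast?_concat⟩
    · rw [hlast]
      rintro _ ⟨⟩
      exact imp_iff_ne_linv.mpr hz

theorem nu_succ (hn : 1 ≤ n) (x y : Fin k × Bool) :
    nu k (n + 1) x y = ∑ z ∈ Finset.univ.erase (linv y), nu k n x z := by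
  rw [nu, wordsXY_succ hn, Finset.card_image_of_injective _ (mul_left_injective _),
    Finset.card_biUnion]
  · rfl
  · exact fun z _ z' _ h => disjoint_wordsXY (by simpa using h)

theorem nu_succ_add_nu_linv (hn : 1 ≤ n) (x y : Fin k × Bool) :
    nu k (n + 1) x y + nu k n x (linv y) = ∑ z, nu k n x z := by
  rw [nu_succ hn, Finset.sum_erase_add _ _ (Finset.mem_univ _)]

end Counting

section TwoValues

variable {k : ℕ}

theorem exists_nu_eq (n : ℕ) (hn : 1 ≤ n) : ∃ m : ℤ, ∀ x y : Fin k × Bool,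
    (nu k n x y : ℤ) = m + (-1) ^ (n + 1) * if y = linv^[n + 1] x then 1 else 0 := by
  induction n, hn using Nat.le_induction with
  | base => exact ⟨0, fun x y => by simp [nu_one, linv_involutive x]⟩
  | succ n hn ih =>
    obtain ⟨m, hm⟩ := ih
    refine ⟨(2 * k - 1) * m + (-1) ^ (n + 1), fun x y => ?_⟩
    have hrow : ∑ z, (nu k n x z : ℤ) = 2 * k * m + (-1) ^ (n + 1) := by
      simp only [hm, Finset.sum_add_distrib, ← Finset.mul_sum, Finset.sum_ite_eq',
        Finset.mem_univ, if_true, Finset.sum_const, Finset.card_univ]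
      simp [mul_comm]
    have hflip : (if linv y = linv^[n + 1] x then (1 : ℤ) else 0) =
        if y = linv^[n + 1 + 1] x then 1 else 0 := by
      simp only [linv_involutive.eq_iff, Function.iterate_succ_apply']
    have hstep := congrArg (Nat.cast (R := ℤ)) (nu_succ_add_nu_linv hn x y)
    push_cast at hstep
    rw [hm x (linv y), hrow, hflip] at hstep
    rw [pow_succ]
    linear_combination hstep

theorem exists_nu_mem_Icc (n : ℕ) : ∃ m : ℤ, ∀ x y : Fin k × Bool,
    m ≤ nu k n x y ∧ (nu k n x y : ℤ) ≤ m + 1 := by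
  rcases Nat.eq_zero_or_pos n with rfl | hn
  · exact ⟨0, fun x y => by simp [nu_zero]⟩
  obtain ⟨m, hm⟩ := exists_nu_eq n hn
  rcases neg_one_pow_eq_or ℤ (n + 1) with hsign | hsign
  · refine ⟨m, fun x y => ?_⟩
    rw [hm, hsign]
    split_ifs <;> omega
  · refine ⟨m - 1, fun x y => ?_⟩
    rw [hm, hsign]
    split_ifs <;> omega

end TwoValues

section Subsets

variable {k n : ℕ}

theorem nuS_eq_sum (σ τ : Finset (Fin k × Bool)) :
    nuS k n σ τ = ∑ p ∈ σ ×ˢ τ, nu k n p.1 p.2 := by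
  have hunion : (words k n).filter
      (fun u => (∃ a ∈ σ, firstLetter u = some a) ∧ (∃ b ∈ τ, lastLetter u = some b)) =
      (σ ×ˢ τ).biUnion (fun p => wordsXY k n p.1 p.2) := by
    ext u
    simp only [Finset.mem_filter, Finset.mem_biUnion, Finset.mem_product, wordsXY]
    constructor
    · rintro ⟨hu, ⟨a, ha, hfirst⟩, ⟨b, hb, hlast⟩⟩
      exact ⟨(a, b), ⟨ha, hb⟩, hu, hfirst, hlast⟩
    · rintro ⟨⟨a, b⟩, ⟨ha, hb⟩, hu, hfirst, hlast⟩
      exact ⟨hu, ⟨a, ha, hfirst⟩, ⟨b, hb, hlast⟩⟩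
  rw [nuS, hunion, Finset.card_biUnion fun p _ q _ h => disjoint_wordsXY h]
  rfl

theorem abs_nuS_sub_nuS_le {σ₁ σ₂ τ₁ τ₂ : Finset (Fin k × Bool)}
    (hσ : σ₁.card = σ₂.card) (hτ : τ₁.card = τ₂.card) :
    |(nuS k n σ₁ τ₁ : ℤ) - nuS k n σ₂ τ₂| ≤ σ₁.card * τ₁.card := by
  obtain ⟨m, hm⟩ := exists_nu_mem_Icc (k := k) n
  have hbounds : ∀ σ τ : Finset (Fin k × Bool),
      σ.card * τ.card * m ≤ nuS k n σ τ ∧ (nuS k n σ τ : ℤ) ≤ σ.card * τ.card * (m + 1) := by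
    intro σ τ
    rw [nuS_eq_sum, Nat.cast_sum]
    constructor
    · simpa using Finset.card_nsmul_le_sum (σ ×ˢ τ) _ m fun p _ => (hm p.1 p.2).1
    · simpa using Finset.sum_le_card_nsmul (σ ×ˢ τ) _ (m + 1) fun p _ => (hm p.1 p.2).2
  obtain ⟨hlow₁, hup₁⟩ := hbounds σ₁ τ₁
  obtain ⟨hlow₂, hup₂⟩ := hbounds σ₂ τ₂
  rw [← hσ, ← hτ] at hlow₂ hup₂
  rw [abs_le]
  constructor <;> linarith

end Subsets

theorem nuS_diff_bound_general (k : ℕ) (n : ℕ)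
    (σ₁ σ₂ τ₁ τ₂ : Finset (Fin k × Bool))
    (hσ : σ₁.card = σ₂.card) (hτ : τ₁.card = τ₂.card) :
    |(nuS k n σ₁ τ₁ : ℝ) - nuS k n σ₂ τ₂| ≤ 2 * σ₁.card * τ₁.card * (2 + 3 / (2 * k)) ∧
    |(nuS k n σ₁ τ₁ : ℝ) - nuS k n σ₂ τ₂| ≤ 16 * k ^ 2 + 12 * k := by
  have hdiff : |(nuS k n σ₁ τ₁ : ℝ) - nuS k n σ₂ τ₂| ≤ σ₁.card * τ₁.card := by
    exact_mod_cast abs_nuS_sub_nuS_le (n := n) hσ hτ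
  have hσk : (σ₁.card : ℝ) ≤ 2 * k := by exact_mod_cast card_le_two_mul σ₁
  have hτk : (τ₁.card : ℝ) ≤ 2 * k := by exact_mod_cast card_le_two_mul τ₁
  have hprod : (0 : ℝ) ≤ σ₁.card * τ₁.card := by positivity
  have hfrac : (0 : ℝ) ≤ 3 / (2 * k) := by positivity
  refine ⟨hdiff.trans ?_, hdiff.trans ?_⟩
  · nlinarith [mul_nonneg hprod hfrac]
  · nlinarith [mul_le_mul hσk hτk (Nat.cast_nonneg _) (by positivity)]

/-- for `k ≥ 2`, `n ≥ 2` and nonempty subsets `σ₁,σ₂,τ₁,τ₂ ⊆ S_k` with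
`|σ₁| = |σ₂|` and `|τ₁| = |τ₂|`:
`|ν_n(σ₁,τ₁) − ν_n(σ₂,τ₂)| ≤ 2|σ₁||τ₁|(2 + 3/(2k))`; in particular the difference is
at most `D_k = 8k²(2 + 3/(2k)) = 16k² + 12k`. -/
theorem nuS_diff_bound (k : ℕ) (hk : 2 ≤ k) (n : ℕ) (hn : 2 ≤ n)
    (σ₁ σ₂ τ₁ τ₂ : Finset (Fin k × Bool))
    (hσ₁ : σ₁.Nonempty) (hσ₂ : σ₂.Nonempty) (hτ₁ : τ₁.Nonempty) (hτ₂ : τ₂.Nonempty)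
    (hσ : σ₁.card = σ₂.card) (hτ : τ₁.card = τ₂.card) :
    |(nuS k n σ₁ τ₁ : ℝ) - nuS k n σ₂ τ₂| ≤ 2 * σ₁.card * τ₁.card * (2 + 3 / (2 * k)) ∧
    |(nuS k n σ₁ τ₁ : ℝ) - nuS k n σ₂ τ₂| ≤ 16 * k ^ 2 + 12 * k :=
  nuS_diff_bound_general k n σ₁ σ₂ τ₁ τ₂ hσ hτ

end
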